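/- Let d ≥ 2, a ∈ ℤ_p, and let M be a Lie subalgebra of L^d(a) of rank e ≥ 2 as a ℤ_p-module. Then M is isomorphic to L^e(p^s a) for some s ∈ ℕ ∪ {∞} (with p^∞ a := 0). -/

import Mathlib

/-!
In `L^d(a)` the bracket is `⁅x, y⁆ = a • (π x • y - π y • x)`, where `π` is the `x₀`-coordinate,
and this formula is inherited by every subalgebra `M`. The ideal `π(M) ⊆ ℤ_p` is `0` or
`(p ^ s)`; in the latter case a vector `u ∈ M` with `π u = p ^ s` together with a basis of the
kernel of `π` on `M` is a basis of `M` in which the bracket reads `⁅u, k⁆ = (p ^ s * a) • k`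
and `⁅k, k'⁆ = 0`. If `π(M) = 0`, then `M` is abelian.
-/

open Module

theorem lie_eq_smul_sub_smul_of_basis {R L ι : Type*} [CommRing R] [LieRing L] [LieAlgebra R L]
    (b : Basis ι R L) (i₀ : ι) (a : R)
    (hab : ∀ i j, i ≠ i₀ → j ≠ i₀ → ⁅b i, b j⁆ = 0) (h0 : ∀ i, i ≠ i₀ → ⁅b i₀, b i⁆ = a • b i)
    (x y : L) : ⁅x, y⁆ = a • (b.coord i₀ x • y - b.coord i₀ y • x) := by
  classical
  let B' : L →ₗ[R] L →ₗ[R] L :=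
    a • ((LinearMap.lsmul R L) ∘ₗ b.coord i₀ - ((LinearMap.lsmul R L) ∘ₗ b.coord i₀).flip)
  have hB : (LieModule.toEnd R L L : L →ₗ[R] Module.End R L) = B' := by
    refine LinearMap.ext_basis b b fun i j => ?_
    simp only [B', LieHom.coe_toLinearMap, LieModule.toEnd_apply_apply, LinearMap.smul_apply,
      LinearMap.sub_apply, LinearMap.coe_comp, Function.comp_apply, LinearMap.flip_apply,
      LinearMap.lsmul_apply, Basis.coord_apply, Basis.repr_self, Finsupp.single_apply]
    by_cases hi : i = i₀ <;> by_cases hj : j = i₀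
    · simp [hi, hj]
    · simp [hi, hj, h0 j hj]
    · rw [← lie_skew, hj, h0 i hi]; simp [hi]
    · simp [hab i j hi hj, hi, hj]
  simpa [B'] using LinearMap.congr_fun₂ hB x y

theorem LinearMap.exists_basis_apply_zero_eq_of_range_eq_span
    {R M : Type*} [CommRing R] [IsDomain R] [IsPrincipalIdealRing R]
    [AddCommGroup M] [Module R M] [Module.Free R M] [Module.Finite R M]
    {n : ℕ} (hn : finrank R M = n + 1) (φ : M →ₗ[R] R) {g : R}
    (hg : LinearMap.range φ = Ideal.span {g}) :
    ∃ y : Basis (Fin (n + 1)) R M, φ (y 0) = g ∧ ∀ i ≠ 0, φ (y i) = 0 := by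
  rcases eq_or_ne g 0 with rfl | hg0
  · rw [Ideal.span_singleton_eq_bot.mpr rfl, LinearMap.range_eq_bot] at hg
    exact ⟨(finBasis R M).reindex (finCongr hn), by simp [hg], by simp [hg]⟩
  obtain ⟨u, hu⟩ : ∃ u, φ u = g := by
    rw [← LinearMap.mem_range, hg]; exact Ideal.mem_span_singleton_self g
  have hli : ∀ (c : R), ∀ x ∈ LinearMap.ker φ, c • u + x = 0 → c = 0 := by
    intro c x hx hcx
    have := congrArg φ hcx
    rw [map_add, map_smul, hu, LinearMap.mem_ker.mp hx, add_zero, map_zero, smul_eq_mul] at this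
    exact (mul_eq_zero.mp this).resolve_right hg0
  have hsp : ∀ z, ∃ c : R, z + c • u ∈ LinearMap.ker φ := by
    intro z
    obtain ⟨t, ht⟩ := Ideal.mem_span_singleton'.mp (hg ▸ LinearMap.mem_range_self φ z)
    exact ⟨-t, by simp [hu, ht]⟩
  have hk : finrank R (LinearMap.ker φ) = n := by
    have := finrank_eq_card_basis (Basis.mkFinCons u (finBasis R (LinearMap.ker φ)) hli hsp)
    simp only [Fintype.card_fin] at this
    omega
  let y := Basis.mkFinCons u ((finBasis R (LinearMap.ker φ)).reindex (finCongr hk)) hli hsp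
  refine ⟨y, by simp [y, hu], fun i hi => ?_⟩
  obtain ⟨j, rfl⟩ := Fin.exists_succ_eq.mpr hi
  simp [y]

theorem PadicInt.exists_eq_span_pow_p_or_zero {p : ℕ} [Fact p.Prime] (I : Ideal ℤ_[p]) :
    ∃ g : ℤ_[p], ((∃ s : ℕ, g = (p : ℤ_[p]) ^ s) ∨ g = 0) ∧ I = Ideal.span {g} := by
  rcases eq_or_ne I ⊥ with rfl | hI
  · exact ⟨0, Or.inr rfl, (Ideal.span_singleton_eq_bot.mpr rfl).symm⟩
  · obtain ⟨s, hs⟩ := PadicInt.ideal_eq_span_pow_p hI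
    exact ⟨_, Or.inl ⟨s, rfl⟩, hs⟩

/-- Let `d ≥ 2`, `a ∈ ℤ_p`, and `M` a Lie subalgebra of `L^d(a)` of
rank `e ≥ 2`. Then `M ≅ L^e(p^s a)` for some `s ∈ ℕ ∪ {∞}` (with `p^∞ a := 0`),
i.e. `M` has a basis realizing the defining relations of `L^e(c)` with `c = p^s a`
or `c = 0`. -/
theorem stmt_11 (p : ℕ) [Fact p.Prime] (d : ℕ) (hd : 2 ≤ d) (a : ℤ_[p])
    (L : Type*) [LieRing L] [LieAlgebra ℤ_[p] L]
    (b : Module.Basis (Fin d) ℤ_[p] L)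
    (hab : ∀ i j : Fin d, i ≠ ⟨0, by omega⟩ → j ≠ ⟨0, by omega⟩ → ⁅b i, b j⁆ = 0)
    (h0 : ∀ i : Fin d, i ≠ ⟨0, by omega⟩ → ⁅b ⟨0, by omega⟩, b i⁆ = a • b i)
    (M : LieSubalgebra ℤ_[p] L) (e : ℕ) (he : 2 ≤ e)
    (hrk : Module.finrank ℤ_[p] ↥M = e) :
    ∃ c : ℤ_[p], ((∃ s : ℕ, c = (p : ℤ_[p]) ^ s * a) ∨ c = 0) ∧
      ∃ y : Module.Basis (Fin e) ℤ_[p] ↥M,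
        (∀ i j : Fin e, i ≠ ⟨0, by omega⟩ → j ≠ ⟨0, by omega⟩ → ⁅y i, y j⁆ = 0) ∧
        ∀ i : Fin e, i ≠ ⟨0, by omega⟩ → ⁅y ⟨0, by omega⟩, y i⁆ = c • y i := by
  obtain ⟨n, rfl⟩ : ∃ n, e = n + 1 := ⟨e - 1, by omega⟩
  let φ : M →ₗ[ℤ_[p]] ℤ_[p] := b.coord ⟨0, by omega⟩ ∘ₗ M.toSubmodule.subtype
  have hM : ∀ x y : M, ⁅x, y⁆ = a • (φ x • y - φ y • x) := fun x y =>
    Subtype.ext (lie_eq_smul_sub_smul_of_basis b _ a hab h0 x y)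
  have := Module.Free.of_basis b
  have := Module.Finite.of_basis b
  have : Module.Free ℤ_[p] M := inferInstanceAs (Module.Free ℤ_[p] M.toSubmodule)
  have : Module.Finite ℤ_[p] M := inferInstanceAs (Module.Finite ℤ_[p] M.toSubmodule)
  obtain ⟨g, hg, hφ⟩ := PadicInt.exists_eq_span_pow_p_or_zero (LinearMap.range φ)
  obtain ⟨y, hy0, hy⟩ := φ.exists_basis_apply_zero_eq_of_range_eq_span hrk hφ
  refine ⟨g * a, ?_, y, fun i j hi hj => ?_, fun i hi => ?_⟩
  · rcases hg with ⟨s, rfl⟩ | rfl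
    · exact Or.inl ⟨s, rfl⟩
    · exact Or.inr (zero_mul a)
  · rw [hM, hy i hi, hy j hj]
    simp
  · rw [hM, Fin.zero_eta, hy0, hy i hi]
    simp [smul_smul, mul_comm]
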